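/- Let G be a countable group and A a finite alphabet. Let τ : A^G → A^G be a pre-injective and stably post-surjective NUCA with finite memory. Then τ is stably invertible. -/

import Mathlib

open Function Set Pointwise

section Defs

variable {G A S : Type*} [Group G]

/-- The NUCA `σ_s : A^G → A^G` determined by the configuration of local
defining maps `s ∈ S^G`, `S = A^(A^M)`:
`σ_s(x)(g) = s(g)((g⁻¹x)|_M)` where `(g⁻¹x)(h) = x(gh)`. -/
def nuca {M : Finset G} (s : G → ((M → A) → A)) : (G → A) → (G → A) :=
  fun x g => s g fun m => x (g * (m : G))

/-- The closure, in the prodiscrete topology on `S^G`, of the shift orbit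
`{gs : g ∈ G}`, where `(gs)(h) = s(g⁻¹h)`. -/
def orbitClosure (s : G → S) : Set (G → S) :=
  @closure (G → S) (@Pi.topologicalSpace G (fun _ => S) fun _ => ⊥)
    {p | ∃ g : G, p = fun h => s (g⁻¹ * h)}

/-- `τ` is a NUCA with finite memory. -/
def IsNUCAFin (τ : (G → A) → (G → A)) : Prop :=
  ∃ (M : Finset G) (s : G → ((M → A) → A)), τ = nuca s

/-- `τ` is invertible: it is bijective and its inverse is a NUCA with finite memory. -/
def IsInvertibleNUCA (τ : (G → A) → (G → A)) : Prop :=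
  Function.Bijective τ ∧ ∃ ρ : (G → A) → (G → A), IsNUCAFin ρ ∧
    Function.LeftInverse ρ τ ∧ Function.RightInverse ρ τ

/-- `σ_s` is stably injective: `σ_p` is injective for every `p ∈ Σ(s)`. -/
def StablyInjective {M : Finset G} (s : G → ((M → A) → A)) : Prop :=
  ∀ p ∈ orbitClosure s, Function.Injective (nuca p)

/-- `σ_s` is stably invertible. -/
def StablyInvertible {M : Finset G} (s : G → ((M → A) → A)) : Prop :=
  ∃ (N : Finset G) (t : G → ((N → A) → A)),
    ∀ p ∈ orbitClosure s, ∃ q ∈ orbitClosure t,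
      nuca p ∘ nuca q = id ∧ nuca q ∘ nuca p = id

/-- Two configurations are asymptotic if they agree outside a finite set. -/
def Asymptotic (x y : G → S) : Prop :=
  ∃ Ω : Finset G, ∀ g ∉ Ω, x g = y g

/-- `s` is asymptotically constant. -/
def AsymptoticallyConstant (s : G → S) : Prop :=
  ∃ c : S, Asymptotic s fun _ => c

/-- `τ` is pre-injective. -/
def PreInjective (τ : (G → A) → (G → A)) : Prop :=
  ∀ x y : G → A, Asymptotic x y → τ x = τ y → x = y

/-- `τ` is post-surjective. -/
def PostSurjective (τ : (G → A) → (G → A)) : Prop :=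
  ∀ x y : G → A, Asymptotic y (τ x) → ∃ z : G → A, Asymptotic z x ∧ τ z = y

/-- `σ_s` is stably post-surjective: `σ_p` is post-surjective for all `p ∈ Σ(s)`. -/
def StablyPostSurjective {M : Finset G} (s : G → ((M → A) → A)) : Prop :=
  ∀ p ∈ orbitClosure s, PostSurjective (nuca p)

/-- `τ` is a cellular automaton: a NUCA with finite memory and a constant
configuration of local defining maps. -/
def IsCellularAutomaton (τ : (G → A) → (G → A)) : Prop :=
  ∃ (M : Finset G) (μ : (M → A) → A), τ = nuca fun _ : G => μ

/-- `G` is surjunctive: over every finite alphabet, injective CA are surjective. -/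
def Surjunctive (G : Type*) [Group G] : Prop :=
  ∀ (B : Type) [Fintype B] (τ : (G → B) → (G → B)),
    IsCellularAutomaton τ → Function.Injective τ → Function.Surjective τ

/-- `G` is post-injunctive: over every finite alphabet, post-surjective CA are
pre-injective. -/
def PostInjunctive (G : Type*) [Group G] : Prop :=
  ∀ (B : Type) [Fintype B] (τ : (G → B) → (G → B)),
    IsCellularAutomaton τ → PostSurjective τ → PreInjective τ

/-- `s` has uniformly bounded singularity: for every finite symmetric `E ∋ 1`
there is a finite `F ⊇ E` such that `s` is constant on `FE ∖ F`. -/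
def UniformlyBoundedSingularity (s : G → S) : Prop :=
  ∀ E : Finset G, (1 : G) ∈ E → (∀ g ∈ E, g⁻¹ ∈ E) →
    ∃ F : Finset G, E ⊆ F ∧ ∃ c : S,
      ∀ g ∈ ((F : Set G) * (E : Set G)) \ (F : Set G), s g = c

end Defs

/-!
Two compactness arguments in the prodiscrete topology carry the proof. First, the
post-surjectivity of all `σ_p`, `p ∈ Σ(s)`, is uniform: a change of `σ_p(x)` at one cell `g` is
realised by changing `x` only inside `gV` for a fixed finite `V`. Iterating over a finite set of
cells, one can glue two `σ_p`-equal configurations `x ≠ y` into a configuration asymptotic to `x`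
with the same image but differing from `x`; as pre-injectivity passes from `s` to every
`p ∈ Σ(s)`, every `σ_p` is injective, hence bijective. Second, injectivity is then also uniform:
`x(1)` is determined by `p|_N` and `σ_p(x)|_N` for a fixed finite `N`, which yields inverse local
rules `t` with `σ_q = σ_p⁻¹` for the corresponding `q ∈ Σ(t)`.
-/

section Shift

variable {G S : Type*} [Group G]

def shift (g : G) (p : G → S) : G → S := fun h => p (g⁻¹ * h)

@[simp]
lemma shift_apply (g : G) (p : G → S) (h : G) : shift g p h = p (g⁻¹ * h) := rfl

lemma shift_inv_shift (g : G) (p : G → S) : shift g⁻¹ (shift g p) = p := by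
  funext h; simp

lemma shift_shift_inv (g : G) (p : G → S) : shift g (shift g⁻¹ p) = p := by
  simpa using shift_inv_shift g⁻¹ p

lemma shift_injective (g : G) : Injective (shift g : (G → S) → G → S) :=
  LeftInverse.injective (shift_inv_shift g)

lemma Asymptotic.shift {x y : G → S} (hxy : Asymptotic x y) (g : G) :
    Asymptotic (shift g x) (shift g y) := by
  classical
  obtain ⟨Ω, hΩ⟩ := hxy
  refine ⟨g • Ω, fun h hh => hΩ _ fun hmem => hh ?_⟩
  simpa using Finset.smul_mem_smul_finset (a := g) hmem

end Shift

section OrbitClosure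

variable {G S : Type*} [Group G]

lemma mem_orbitClosure_iff {s p : G → S} :
    p ∈ orbitClosure s ↔ ∀ K : Finset G, ∃ g : G, ∀ h ∈ K, p h = shift g s h := by
  let _ : TopologicalSpace S := ⊥
  have : DiscreteTopology S := ⟨rfl⟩
  constructor
  · intro hp K
    have hopen : IsOpen ((K : Set G).pi fun h => {p h}) :=
      isOpen_set_pi K.finite_toSet fun _ _ => isOpen_discrete _
    obtain ⟨q, hqp, g, rfl⟩ := mem_closure_iff.1 hp _ hopen fun _ _ => rfl
    exact ⟨g, fun h hh => (hqp h hh).symm⟩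
  · intro hp
    refine mem_closure_iff.2 fun U hU hpU => ?_
    obtain ⟨K, u, hu, hKu⟩ := isOpen_pi_iff.1 hU p hpU
    obtain ⟨g, hg⟩ := hp K
    exact ⟨shift g s, hKu fun h hh => hg h hh ▸ (hu h hh).2, g, rfl⟩

lemma self_mem_orbitClosure (s : G → S) : s ∈ orbitClosure s :=
  mem_orbitClosure_iff.2 fun _ => ⟨1, fun _ _ => by simp⟩

lemma shift_mem_orbitClosure {s p : G → S} (hp : p ∈ orbitClosure s) (k : G) :
    shift k p ∈ orbitClosure s := by
  classical
  refine mem_orbitClosure_iff.2 fun K => ?_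
  obtain ⟨g, hg⟩ := mem_orbitClosure_iff.1 hp (k⁻¹ • K)
  refine ⟨k * g, fun h hh => ?_⟩
  simpa [mul_assoc] using hg (k⁻¹ * h) (Finset.smul_mem_smul_finset hh)

end OrbitClosure

section PointwiseLimit

variable {ι G X : Type*}

def PointwiseLimit (l : Filter ι) (f : ι → G → X) (F : G → X) : Prop :=
  ∀ g, ∀ᶠ i in l, f i g = F g

variable {l : Filter ι} {f f' : ι → G → X} {F F' : G → X}

lemma PointwiseLimit.const (l : Filter ι) (F : G → X) : PointwiseLimit l (fun _ => F) F :=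
  fun _ => Filter.Eventually.of_forall fun _ => rfl

lemma exists_pointwiseLimit [Finite X] (U : Ultrafilter ι) (f : ι → G → X) :
    ∃ F, PointwiseLimit U f F := by
  choose F hF using fun g => (U.map (f · g)).eq_pure_of_finite
  exact ⟨F, fun g => show {F g} ∈ U.map (f · g) by rw [hF g]; exact Ultrafilter.mem_pure.2 rfl⟩

lemma PointwiseLimit.eventually_eqOn (hf : PointwiseLimit l f F) (K : Finset G) :
    ∀ᶠ i in l, ∀ g ∈ K, f i g = F g :=
  (Filter.eventually_all_finset K).2 fun g _ => hf g

lemma PointwiseLimit.eq_of_eventually_eq [l.NeBot] (hf : PointwiseLimit l f F)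
    (hf' : PointwiseLimit l f' F') (hff' : ∀ g, ∀ᶠ i in l, f i g = f' i g) : F = F' := by
  funext g
  obtain ⟨i, hi, hi', hii'⟩ := ((hf g).and ((hf' g).and (hff' g))).exists
  rw [← hi, ← hi', hii']

end PointwiseLimit

noncomputable def exhaustion (G : Type*) : Ultrafilter (Finset G) :=
  Ultrafilter.of Filter.atTop

lemma eventually_subset_exhaustion {G : Type*} (K : Finset G) :
    ∀ᶠ V in (exhaustion G : Filter (Finset G)), K ⊆ V :=
  (Filter.eventually_ge_atTop K).filter_mono (Ultrafilter.of_le _)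

lemma eventually_mem_exhaustion {G : Type*} (g : G) :
    ∀ᶠ V in (exhaustion G : Filter (Finset G)), g ∈ V :=
  (eventually_subset_exhaustion {g}).mono fun _ hV => hV (Finset.mem_singleton_self g)

section Nuca

variable {G A : Type*} [Group G] {M : Finset G}

lemma nuca_shift (p : G → (M → A) → A) (g : G) (x : G → A) :
    nuca (shift g p) (shift g x) = shift g (nuca p x) := by
  funext h; simp [nuca, mul_assoc]

lemma nuca_apply_congr {p p' : G → (M → A) → A} {x x' : G → A} {h : G}
    (hp : p h = p' h) (hx : ∀ m ∈ M, x (h * m) = x' (h * m)) : nuca p x h = nuca p' x' h := by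
  simp only [nuca, hp]
  congr 1
  funext m
  exact hx m m.2

lemma mem_mul_inv_of_mul_mem [DecidableEq G] {E : Finset G} {h m : G} (hm : m ∈ M)
    (hE : h * m ∈ E) : h ∈ E * M⁻¹ := by
  simpa using Finset.mul_mem_mul hE (Finset.inv_mem_inv hm)

lemma PointwiseLimit.nuca {ι : Type*} {l : Filter ι} {pf : ι → G → (M → A) → A}
    {xf : ι → G → A} {p : G → (M → A) → A} {x : G → A} (hp : PointwiseLimit l pf p)
    (hx : PointwiseLimit l xf x) :
    PointwiseLimit l (fun i => nuca (pf i) (xf i)) (nuca p x) := by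
  classical
  exact fun g => ((hp g).and (hx.eventually_eqOn (g • M))).mono fun i hi =>
    nuca_apply_congr hi.1 fun m hm => hi.2 _ (Finset.smul_mem_smul_finset hm)

lemma PointwiseLimit.mem_orbitClosure {ι S : Type*} {l : Filter ι} [l.NeBot] {f : ι → G → S}
    {s p : G → S} (hf : PointwiseLimit l f p) (hmem : ∀ i, f i ∈ orbitClosure s) :
    p ∈ orbitClosure s := by
  refine mem_orbitClosure_iff.2 fun K => ?_
  obtain ⟨i, hi⟩ := (hf.eventually_eqOn K).exists
  obtain ⟨g, hg⟩ := mem_orbitClosure_iff.1 (hmem i) K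
  exact ⟨g, fun h hh => (hi h hh).symm.trans (hg h hh)⟩

lemma PostSurjective.surjective_nuca [Finite A] {p : G → (M → A) → A}
    (hp : PostSurjective (nuca p)) : Surjective (nuca p) := by
  classical
  intro w
  have approx : ∀ K : Finset G, ∃ z, ∀ g ∈ K, nuca p z g = w g := by
    intro K
    obtain ⟨z, -, hz⟩ := hp w (K.piecewise w (nuca p w))
      ⟨K, fun g hg => K.piecewise_eq_of_notMem _ _ hg⟩
    exact ⟨z, fun g hg => by rw [hz, K.piecewise_eq_of_mem _ _ hg]⟩
  choose zf hzf using approx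
  obtain ⟨z, hz⟩ := exists_pointwiseLimit (exhaustion G) zf
  exact ⟨z, ((PointwiseLimit.const _ p).nuca hz).eq_of_eventually_eq
    (PointwiseLimit.const _ w) fun g => (eventually_mem_exhaustion g).mono fun V => hzf V g⟩

lemma nuca_eq_nuca_of_eqOn [DecidableEq G] {p p' : G → (M → A) → A} {x z : G → A}
    {Ω : Finset G} (hxz : ∀ g ∉ Ω, x g = z g) (hpp' : ∀ h ∈ Ω * M⁻¹, p h = p' h)
    (he : nuca p x = nuca p z) : nuca p' x = nuca p' z := by
  funext h
  by_cases hh : ∀ m ∈ M, h * m ∉ Ω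
  · exact nuca_apply_congr rfl fun m hm => hxz _ (hh m hm)
  obtain ⟨m, hm, hmΩ⟩ : ∃ m ∈ M, h * m ∈ Ω := by simpa using hh
  have hp := hpp' h (mem_mul_inv_of_mul_mem hm hmΩ)
  calc nuca p' x h = nuca p x h := nuca_apply_congr hp.symm fun _ _ => rfl
    _ = nuca p z h := congrFun he h
    _ = nuca p' z h := nuca_apply_congr hp fun _ _ => rfl

lemma PreInjective.nuca_shift {s : G → (M → A) → A} (hs : PreInjective (nuca s)) (g : G) :
    PreInjective (nuca (shift g s)) := by
  intro x z hxz he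
  have hshift : ∀ y, nuca s (shift g⁻¹ y) = shift g⁻¹ (nuca (shift g s) y) := fun y => by
    rw [← _root_.nuca_shift, shift_inv_shift]
  refine shift_injective g⁻¹ (hs _ _ (hxz.shift g⁻¹) ?_)
  rw [hshift, hshift, he]

lemma PreInjective.of_mem_orbitClosure {s p : G → (M → A) → A} (hs : PreInjective (nuca s))
    (hp : p ∈ orbitClosure s) : PreInjective (nuca p) := by
  classical
  rintro x z ⟨Ω, hΩ⟩ he
  obtain ⟨g, hg⟩ := mem_orbitClosure_iff.1 hp (Ω * M⁻¹)
  exact hs.nuca_shift g x z ⟨Ω, hΩ⟩ (nuca_eq_nuca_of_eqOn hΩ hg he)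

def IsCorrectableAt (p : G → (M → A) → A) (g : G) (W : Finset G) : Prop :=
  ∀ x y : G → A, (∀ h ≠ g, y h = nuca p x h) → ∃ z, (∀ h ∉ W, z h = x h) ∧ nuca p z = y

lemma IsCorrectableAt.of_shift [DecidableEq G] {p : G → (M → A) → A} {g : G} {W : Finset G}
    (hW : IsCorrectableAt (shift g⁻¹ p) 1 W) : IsCorrectableAt p g (g • W) := by
  intro x y hy
  obtain ⟨z, hzx, hz⟩ := hW (shift g⁻¹ x) (shift g⁻¹ y) fun k hk => by
    rw [nuca_shift]
    exact hy _ (by simpa using hk)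
  refine ⟨shift g z, fun k hk => ?_, ?_⟩
  · have hk' : g⁻¹ * k ∉ W := fun hmem =>
      hk (by simpa using Finset.smul_mem_smul_finset (a := g) hmem)
    simpa using hzx _ hk'
  · rw [← shift_shift_inv g p, nuca_shift, hz, shift_shift_inv]

lemma exists_correction_of_isCorrectableAt [DecidableEq G] {p : G → (M → A) → A}
    {V : Finset G} (hV : ∀ g, IsCorrectableAt p g (g • V)) (Ω : Finset G) :
    ∀ x y : G → A, (∀ h ∉ Ω, y h = nuca p x h) →
      ∃ z, (∀ h ∉ Ω * V, z h = x h) ∧ nuca p z = y := by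
  induction Ω using Finset.induction with
  | empty =>
    exact fun x y hy => ⟨x, fun _ _ => rfl, funext fun h => (hy h (Finset.notMem_empty h)).symm⟩
  | insert g Ω _ ih =>
    intro x y hy
    obtain ⟨z₁, hz₁x, hz₁⟩ := ih x (update y g (nuca p x g)) fun h hh => by
      by_cases hhg : h = g
      · simp [hhg]
      · rw [update_of_ne hhg]
        exact hy h (by simp [hhg, hh])
    obtain ⟨z, hzz₁, hz⟩ := hV g z₁ y fun h hh => by rw [hz₁, update_of_ne hh]
    refine ⟨z, fun h hh => ?_, hz⟩
    have hgV : h ∉ g • V := fun hmem => hh <| by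
      obtain ⟨v, hv, rfl⟩ := Finset.mem_smul_finset.1 hmem
      exact Finset.mul_mem_mul (Finset.mem_insert_self g Ω) hv
    have hΩV : h ∉ Ω * V := fun hmem => hh <| by
      obtain ⟨w, hw, v, hv, rfl⟩ := Finset.mem_mul.1 hmem
      exact Finset.mul_mem_mul (Finset.mem_insert_of_mem hw) hv
    rw [hzz₁ h hgV, hz₁x h hΩV]

lemma injective_nuca_of_isCorrectableAt [DecidableEq G] {p : G → (M → A) → A} {V : Finset G}
    (hpre : PreInjective (nuca p)) (hV : ∀ g, IsCorrectableAt p g (g • V)) :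
    Injective (nuca p) := by
  intro x y hxy
  by_contra hne
  obtain ⟨g₀, hg₀⟩ := Function.ne_iff.1 hne
  -- `E` contains `g₀ v⁻¹ M` for all `v ∈ V`, so that `g₀ ∉ Ω * V`.
  set E : Finset G := insert g₀ (g₀ • (V⁻¹ * M))
  set Ω : Finset G := (E * M⁻¹) \ (g₀ • V⁻¹)
  have hglue : ∀ h ∉ Ω, nuca p x h = nuca p (E.piecewise y x) h := by
    intro h hh
    by_cases hhV : h ∈ g₀ • V⁻¹
    · obtain ⟨w, hw, rfl⟩ := Finset.mem_smul_finset.1 hhV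
      rw [congrFun hxy]
      refine nuca_apply_congr rfl fun m hm => (E.piecewise_eq_of_mem _ _ ?_).symm
      rw [smul_eq_mul, mul_assoc]
      exact Finset.mem_insert_of_mem (Finset.smul_mem_smul_finset (Finset.mul_mem_mul hw hm))
    · have hEM : h ∉ E * M⁻¹ := fun hmem => hh (Finset.mem_sdiff.2 ⟨hmem, hhV⟩)
      exact nuca_apply_congr rfl fun m hm => (E.piecewise_eq_of_notMem _ _
        fun hmE => hEM (mem_mul_inv_of_mul_mem hm hmE)).symm
  obtain ⟨z, hz, hze⟩ := exists_correction_of_isCorrectableAt hV Ω _ _ hglue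
  have hg₀ΩV : g₀ ∉ Ω * V := by
    intro hmem
    obtain ⟨w, hw, v, hv, hwv⟩ := Finset.mem_mul.1 hmem
    refine (Finset.mem_sdiff.1 hw).2 (Finset.mem_smul_finset.2 ⟨v⁻¹, Finset.inv_mem_inv hv, ?_⟩)
    rw [smul_eq_mul, ← hwv, mul_inv_cancel_right]
  have hzx : z = x := hpre z x ⟨E ∪ Ω * V, fun h hh => by
    rw [Finset.mem_union, not_or] at hh
    rw [hz h hh.2, E.piecewise_eq_of_notMem _ _ hh.1]⟩ hze
  apply hg₀
  rw [← hzx, hz g₀ hg₀ΩV, E.piecewise_eq_of_mem _ _ (Finset.mem_insert_self _ _)]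

lemma nuca_piecewise_eq [DecidableEq G] {p p' : G → (M → A) → A} {x x' y' z : G → A}
    {Ω : Finset G} (hzx : ∀ h ∉ Ω, z h = x h)
    (hp : ∀ h ∈ insert 1 (Ω * M⁻¹), p' h = p h) (hx : ∀ g ∈ insert 1 (Ω * M⁻¹) * M, x' g = x g)
    (hy : ∀ h ∈ insert 1 (Ω * M⁻¹), y' h = nuca p z h) (hy' : ∀ h ≠ 1, y' h = nuca p' x' h) :
    nuca p' (Ω.piecewise z x') = y' := by
  funext h
  by_cases hK : h ∈ insert 1 (Ω * M⁻¹)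
  · rw [hy h hK]
    refine nuca_apply_congr (hp h hK) fun m hm => ?_
    by_cases hmΩ : h * m ∈ Ω
    · exact Ω.piecewise_eq_of_mem _ _ hmΩ
    · rw [Ω.piecewise_eq_of_notMem _ _ hmΩ, hx _ (Finset.mul_mem_mul hK hm), hzx _ hmΩ]
  · rw [hy' h fun h1 => hK (h1 ▸ Finset.mem_insert_self _ _)]
    exact nuca_apply_congr rfl fun m hm => Ω.piecewise_eq_of_notMem _ _
      fun hmΩ => hK (Finset.mem_insert_of_mem (mem_mul_inv_of_mul_mem hm hmΩ))

lemma exists_uniform_isCorrectableAt_one [Finite A] {s : G → (M → A) → A}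
    (hpost : StablyPostSurjective s) :
    ∃ V : Finset G, ∀ p ∈ orbitClosure s, IsCorrectableAt p 1 V := by
  classical
  by_contra! hcon
  simp only [IsCorrectableAt, not_forall, not_exists, not_and] at hcon
  choose pf hpf xf yf hyf hcorr using hcon
  obtain ⟨p, hp⟩ := exists_pointwiseLimit (exhaustion G) pf
  obtain ⟨x, hx⟩ := exists_pointwiseLimit (exhaustion G) xf
  obtain ⟨y, hy⟩ := exists_pointwiseLimit (exhaustion G) yf
  have hpmem : p ∈ orbitClosure s := hp.mem_orbitClosure hpf
  have hyx : Asymptotic y (nuca p x) := ⟨{1}, fun h hh => by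
    obtain ⟨V, hyV, hxV⟩ := ((hy h).and ((hp.nuca hx) h)).exists
    rw [← hyV, ← hxV, hyf V h (by simpa using hh)]⟩
  obtain ⟨z, ⟨Ω, hzx⟩, hz⟩ := hpost p hpmem x y hyx
  set K := insert 1 (Ω * M⁻¹)
  obtain ⟨V, hΩV, hpV, hxV, hyV⟩ := ((eventually_subset_exhaustion Ω).and
    ((hp.eventually_eqOn K).and ((hx.eventually_eqOn (K * M)).and (hy.eventually_eqOn K)))).exists
  refine hcorr V (Ω.piecewise z (xf V)) (fun h hh => Ω.piecewise_eq_of_notMem _ _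
    fun hmem => hh (hΩV hmem)) (nuca_piecewise_eq hzx hpV hxV (fun h hh => ?_) (hyf V))
  rw [hyV h hh, hz]

lemma stablyInjective_of_preInjective_of_stablyPostSurjective [Finite A]
    {s : G → (M → A) → A} (hpre : PreInjective (nuca s)) (hpost : StablyPostSurjective s) :
    StablyInjective s := by
  classical
  obtain ⟨V, hV⟩ := exists_uniform_isCorrectableAt_one hpost
  exact fun p hp => injective_nuca_of_isCorrectableAt (hpre.of_mem_orbitClosure hp)
    fun g => (hV _ (shift_mem_orbitClosure hp g⁻¹)).of_shift

lemma StablyInjective.exists_inverse_memory [Finite A] {s : G → (M → A) → A}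
    (hinj : StablyInjective s) :
    ∃ N : Finset G, ∀ p ∈ orbitClosure s, ∀ x x' : G → A,
      (∀ n ∈ N, nuca p x n = nuca p x' n) → x 1 = x' 1 := by
  by_contra! hcon
  choose pf hpf xf x'f heq hne using hcon
  obtain ⟨p, hp⟩ := exists_pointwiseLimit (exhaustion G) pf
  obtain ⟨x, hx⟩ := exists_pointwiseLimit (exhaustion G) xf
  obtain ⟨x', hx'⟩ := exists_pointwiseLimit (exhaustion G) x'f
  have hxx' : x = x' := hinj p (hp.mem_orbitClosure hpf) <| (hp.nuca hx).eq_of_eventually_eq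
    (hp.nuca hx') fun g => (eventually_mem_exhaustion g).mono fun V => heq V g
  obtain ⟨V, hxV, hx'V⟩ := ((hx 1).and (hx' 1)).exists
  exact hne V (by rw [hxV, hx'V, hxx'])

noncomputable def localInverse [Nonempty A] (N : Finset G) (p : G → (M → A) → A) :
    G → (N → A) → A :=
  fun g u => invFun (fun (x : G → A) (n : N) => nuca (shift g⁻¹ p) x n) u 1

lemma localInverse_mem_orbitClosure [Nonempty A] {N : Finset G} {s p : G → (M → A) → A}
    (hp : p ∈ orbitClosure s) : localInverse N p ∈ orbitClosure (localInverse N s) := by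
  classical
  refine mem_orbitClosure_iff.2 fun K => ?_
  obtain ⟨g, hg⟩ := mem_orbitClosure_iff.1 hp (K * N)
  refine ⟨g, fun h hh => ?_⟩
  have hloc : (fun (x : G → A) (n : N) => nuca (shift h⁻¹ p) x n) =
      fun (x : G → A) (n : N) => nuca (shift (g⁻¹ * h)⁻¹ s) x n := by
    funext x n
    refine nuca_apply_congr ?_ fun _ _ => rfl
    simpa [mul_assoc] using hg (h * n) (Finset.mul_mem_mul hh n.2)
  rw [shift_apply]
  unfold localInverse
  rw [hloc]

lemma nuca_localInverse_nuca [Nonempty A] {N : Finset G} {s p : G → (M → A) → A}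
    (hN : ∀ p ∈ orbitClosure s, ∀ x x' : G → A,
      (∀ n ∈ N, nuca p x n = nuca p x' n) → x 1 = x' 1)
    (hp : p ∈ orbitClosure s) (x : G → A) : nuca (localInverse N p) (nuca p x) = x := by
  funext h
  set r := fun (x : G → A) (n : N) => nuca (shift h⁻¹ p) x n
  have hr : r (shift h⁻¹ x) = fun n : N => nuca p x (h * n) := by
    funext n
    simp [r, nuca_shift]
  have hinv := invFun_eq ⟨_, hr⟩
  show invFun r (fun n : N => nuca p x (h * n)) 1 = x h
  simpa using hN _ (shift_mem_orbitClosure hp h⁻¹) _ (shift h⁻¹ x)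
    fun n hn => (congrFun hinv ⟨n, hn⟩).trans (congrFun hr ⟨n, hn⟩).symm

end Nuca

lemma stablyInvertible_of_isEmpty {G A : Type*} [Group G] [IsEmpty A] {M : Finset G}
    (s : G → (M → A) → A) : StablyInvertible s :=
  ⟨M, s, fun p hp =>
    ⟨p, hp, funext fun x => isEmptyElim (x 1), funext fun x => isEmptyElim (x 1)⟩⟩

theorem preInjective_stablyPostSurjective_implies_stablyInvertible_general
    {G A : Type*} [Group G] [Fintype A]
    {M : Finset G} (s : G → ((M → A) → A))
    (hpre : PreInjective (nuca s)) (hpost : StablyPostSurjective s) :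
    StablyInvertible s := by
  rcases isEmpty_or_nonempty A with hA | hA
  · exact stablyInvertible_of_isEmpty s
  obtain ⟨N, hN⟩ :=
    (stablyInjective_of_preInjective_of_stablyPostSurjective hpre hpost).exists_inverse_memory
  refine ⟨N, localInverse N s, fun p hp =>
    ⟨localInverse N p, localInverse_mem_orbitClosure hp, ?_, ?_⟩⟩
  · funext y
    obtain ⟨x, rfl⟩ := (hpost p hp).surjective_nuca y
    exact congrArg (nuca p) (nuca_localInverse_nuca hN hp x)
  · exact funext (nuca_localInverse_nuca hN hp)

/-- a pre-injective and stably post-surjective NUCA with finite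
memory over a countable group and finite alphabet is stably invertible. -/
theorem preInjective_stablyPostSurjective_implies_stablyInvertible
    {G A : Type*} [Group G] [Countable G] [Fintype A]
    {M : Finset G} (s : G → ((M → A) → A))
    (hpre : PreInjective (nuca s)) (hpost : StablyPostSurjective s) :
    StablyInvertible s :=
  preInjective_stablyPostSurjective_implies_stablyInvertible_general s hpre hpost
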